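/- arXiv:2508.20213 — 2 statements merged into one kernel-verified Lean document; each statement's English description precedes it below -/
import Mathlib

section
/- Let k ≥ 2 be an integer, G a finite simple graph, and for C ⊆ V(G) define W(C) = (1 − |C|·(2k−1)/(k·(3k−2))) · E(C), where E(C) is the number of edges with both endpoints in C. Then max over all C ⊆ V(G) of W(C) equals k·(k−1)²/(6k−4) if and only if G contains a clique of size k. -/
/-!
Write `θ = (2k-1)/(k(3k-2))` and `R = k(k-1)²/(6k-4)`. A coalition `C` with `n` members spans at
most `n(n-1)/2` edges, so `W(C) ≤ (1 - nθ) · n(n-1)/2` whenever `1 - nθ ≥ 0` (and `W(C) ≤ 0 < R`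
otherwise). The cubic identity
`R - (1 - nθ) · n(n-1)/2 = (n-k)² ((2k-1)n + (k-1)²) / (2k(3k-2))`
shows that this bound is at most `R`, with equality only at `n = k`. Hence `W(C) = R` forces
`|C| = k` and `C` to span all `k(k-1)/2` possible edges, i.e. to be a `k`-clique; conversely a
`k`-clique attains `R`.
-/

open Finset

namespace SimpleGraph

variable {V : Type*} (G : SimpleGraph V)

def edgesWithin (C : Finset V) : Set (Sym2 V) :=
  {e ∈ G.edgeSet | ∀ v ∈ e, v ∈ C}

lemma edgesWithin_subset_image_offDiag [DecidableEq V] (C : Finset V) :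
    G.edgesWithin C ⊆ ↑(C.offDiag.image Sym2.mk.uncurry) := by
  rintro ⟨a, b⟩ ⟨hab, hC⟩
  simp only [coe_image, Set.mem_image, mem_coe, mem_offDiag, Prod.exists]
  exact ⟨a, b, ⟨hC a (Sym2.mem_mk_left a b), hC b (Sym2.mem_mk_right a b), G.ne_of_adj hab⟩, rfl⟩

lemma ncard_edgesWithin_le (C : Finset V) : (G.edgesWithin C).ncard ≤ C.card.choose 2 := by
  classical
  rw [← Sym2.card_image_offDiag, ← Set.ncard_coe_finset]
  exact Set.ncard_le_ncard (G.edgesWithin_subset_image_offDiag C) (Finset.finite_toSet _)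

lemma ncard_edgesWithin_eq_choose_two_iff (C : Finset V) :
    (G.edgesWithin C).ncard = C.card.choose 2 ↔ G.IsClique (C : Set V) := by
  classical
  rw [← Sym2.card_image_offDiag, ← Set.ncard_coe_finset]
  constructor
  · intro h a ha b hb hab
    have heq := Set.eq_of_subset_of_ncard_le (G.edgesWithin_subset_image_offDiag C) h.ge
      (Finset.finite_toSet _)
    have : s(a, b) ∈ G.edgesWithin C := heq ▸ by
      simp only [coe_image, Set.mem_image, mem_coe, mem_offDiag, Prod.exists]
      exact ⟨a, b, ⟨ha, hb, hab⟩, rfl⟩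
    exact this.1
  · intro h
    refine congrArg Set.ncard ((G.edgesWithin_subset_image_offDiag C).antisymm ?_)
    rw [coe_image]
    rintro _ ⟨⟨a, b⟩, hab, rfl⟩
    obtain ⟨ha, hb, hne⟩ := mem_offDiag.1 hab
    refine ⟨h ha hb hne, fun v hv => ?_⟩
    rcases Sym2.mem_iff.1 hv with rfl | rfl <;> assumption

end SimpleGraph

section Payoff

variable {k n E : ℝ}

noncomputable def retainedShare (k n : ℝ) : ℝ := 1 - n * (2 * k - 1) / (k * (3 * k - 2))

noncomputable def cliqueValue (k : ℝ) : ℝ := k * (k - 1) ^ 2 / (6 * k - 4)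

lemma cliqueValue_sub_retainedShare_mul (hk : 2 / 3 < k) (n : ℝ) :
    cliqueValue k - retainedShare k n * (n * (n - 1) / 2) =
      (n - k) ^ 2 * ((2 * k - 1) * n + (k - 1) ^ 2) / (2 * k * (3 * k - 2)) := by
  have hd : k * (3 * k - 2) ≠ 0 := by nlinarith
  have hR : cliqueValue k * (6 * k - 4) = k * (k - 1) ^ 2 := div_mul_cancel₀ _ (by linarith)
  have hS : retainedShare k n * (k * (3 * k - 2)) = k * (3 * k - 2) - n * (2 * k - 1) := by
    rw [retainedShare, sub_mul, one_mul, div_mul_cancel₀ _ hd]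
  rw [eq_div_iff (by nlinarith)]
  linear_combination k * hR - n * (n - 1) * hS

lemma retainedShare_mul_le_cliqueValue (hk : 2 / 3 < k) (hn : 0 ≤ n) :
    retainedShare k n * (n * (n - 1) / 2) ≤ cliqueValue k := by
  have := cliqueValue_sub_retainedShare_mul hk n
  have : 0 ≤ (n - k) ^ 2 * ((2 * k - 1) * n + (k - 1) ^ 2) / (2 * k * (3 * k - 2)) := by
    apply div_nonneg (mul_nonneg (sq_nonneg _) _) <;> nlinarith
  linarith

lemma retainedShare_mul_lt_cliqueValue (hk : 1 < k) (hn : 0 ≤ n) (hnk : n ≠ k) :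
    retainedShare k n * (n * (n - 1) / 2) < cliqueValue k := by
  have := cliqueValue_sub_retainedShare_mul (k := k) (by linarith) n
  have : 0 < (n - k) ^ 2 * ((2 * k - 1) * n + (k - 1) ^ 2) / (2 * k * (3 * k - 2)) := by
    have : 0 < (n - k) ^ 2 := by positivity
    apply div_pos (mul_pos this _) <;> nlinarith
  linarith

lemma retainedShare_self_mul (hk : 2 / 3 < k) :
    retainedShare k k * (k * (k - 1) / 2) = cliqueValue k := by
  have h := cliqueValue_sub_retainedShare_mul hk k
  rw [sub_self, zero_pow two_ne_zero, zero_mul, zero_div, sub_eq_zero] at h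
  exact h.symm

lemma cliqueValue_pos (hk : 1 < k) : 0 < cliqueValue k := by
  have : 0 < k - 1 := by linarith
  exact div_pos (by positivity) (by linarith)

lemma retainedShare_mul_le_cliqueValue_of_le (hk : 2 / 3 < k) (hn : 0 ≤ n) (hE₀ : 0 ≤ E)
    (hE : E ≤ n * (n - 1) / 2) : retainedShare k n * E ≤ cliqueValue k := by
  rcases le_total (retainedShare k n) 0 with hs | hs
  · have : 0 ≤ cliqueValue k := by unfold cliqueValue; apply div_nonneg <;> nlinarith
    nlinarith
  · exact (mul_le_mul_of_nonneg_left hE hs).trans (retainedShare_mul_le_cliqueValue hk hn)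

lemma eq_of_retainedShare_mul_eq_cliqueValue (hk : 1 < k) (hn : 0 ≤ n) (hE₀ : 0 ≤ E)
    (hE : E ≤ n * (n - 1) / 2) (h : retainedShare k n * E = cliqueValue k) :
    n = k ∧ E = n * (n - 1) / 2 := by
  have hs : 0 < retainedShare k n := by
    by_contra! hs
    nlinarith [cliqueValue_pos hk]
  have hle : retainedShare k n * E ≤ retainedShare k n * (n * (n - 1) / 2) :=
    mul_le_mul_of_nonneg_left hE hs.le
  have hnk : n = k := by
    by_contra hnk
    linarith [retainedShare_mul_lt_cliqueValue hk hn hnk]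
  subst hnk
  refine ⟨rfl, (mul_right_injective₀ hs.ne').eq_iff.1 ?_⟩
  rw [h, retainedShare_self_mul (by linarith)]

end Payoff

theorem stmt_16_general {V : Type*} (G : SimpleGraph V) (k : ℕ) (hk : 2 ≤ k)
    (W : Finset V → ℝ)
    (hW : ∀ C : Finset V, W C =
      (1 - (C.card : ℝ) * (2 * (k:ℝ) - 1) / ((k:ℝ) * (3 * (k:ℝ) - 2))) *
        ({e ∈ G.edgeSet | ∀ v ∈ e, v ∈ C}.ncard : ℝ)) :
    (∃ C : Finset V, (∀ C' : Finset V, W C' ≤ W C) ∧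
        W C = (k:ℝ) * ((k:ℝ) - 1) ^ 2 / (6 * (k:ℝ) - 4)) ↔
      ∃ S : Finset V, S.card = k ∧ G.IsClique (S : Set V) := by
  have hk₁ : (1 : ℝ) < k := by exact_mod_cast hk
  have hW' : ∀ C, W C = retainedShare k C.card * (G.edgesWithin C).ncard := hW
  have hE : ∀ C : Finset V, ((G.edgesWithin C).ncard : ℝ) ≤ C.card * (C.card - 1 : ℝ) / 2 :=
    fun C => by rw [← Nat.cast_choose_two]; exact_mod_cast G.ncard_edgesWithin_le C
  have hbound : ∀ C, W C ≤ cliqueValue k := fun C =>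
    hW' C ▸ retainedShare_mul_le_cliqueValue_of_le (by linarith) (by positivity) (by positivity) (hE C)
  constructor
  · rintro ⟨C, -, hC⟩
    obtain ⟨hCk, hCE⟩ := eq_of_retainedShare_mul_eq_cliqueValue hk₁ (by positivity)
      (by positivity) (hE C) ((hW' C).symm.trans hC)
    refine ⟨C, by exact_mod_cast hCk, (G.ncard_edgesWithin_eq_choose_two_iff C).1 ?_⟩
    exact_mod_cast hCE.trans (Nat.cast_choose_two ℝ C.card).symm
  · rintro ⟨S, hS, hclique⟩
    have hWS : W S = cliqueValue k := by
      rw [hW', (G.ncard_edgesWithin_eq_choose_two_iff S).2 hclique, Nat.cast_choose_two, hS]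
      exact retainedShare_self_mul (by linarith)
    exact ⟨S, fun C => hWS ▸ hbound C, hWS⟩

theorem stmt_16 {V : Type*} [Fintype V] (G : SimpleGraph V) (k : ℕ) (hk : 2 ≤ k)
    (W : Finset V → ℝ)
    (hW : ∀ C : Finset V, W C =
      (1 - (C.card : ℝ) * (2 * (k:ℝ) - 1) / ((k:ℝ) * (3 * (k:ℝ) - 2))) *
        ({e ∈ G.edgeSet | ∀ v ∈ e, v ∈ C}.ncard : ℝ)) :
    (∃ C : Finset V, (∀ C' : Finset V, W C' ≤ W C) ∧
        W C = (k:ℝ) * ((k:ℝ) - 1) ^ 2 / (6 * (k:ℝ) - 4)) ↔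
      ∃ S : Finset V, S.card = k ∧ G.IsClique (S : Set V) :=
  stmt_16_general G k hk W hW
end

section
/- For every real ε ∈ (0,1), in the two-player game with utilities U_1(e_1,e_2) = e_1·√(e_2+ε) and U_2(e_1,e_2) = e_1·√(e_2+ε) − √(e_2) on [0,1]², the profile (1,0) is the unique pure Nash equilibrium; while in the game with utilities Ũ_1(e_1,e_2) = e_1·√(e_2) and Ũ_2(e_1,e_2) = (e_1 − 1)·√(e_2), the profile (1,1) is a pure Nash equilibrium. Consequently the ratio of shared benefits f(1,1)/f(1,0) for f(e_1,e_2) = e_1·√(e_2 + ε·g) with g = 0 at (1,1) and g = 1 at (1,0), namely √1 / √ε, equals 1/√ε. -/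
/-- Pure Nash equilibrium of a two-player game with strategy sets `[0,1]`. -/
def IsPNE2 (U1 U2 : ℝ → ℝ → ℝ) (p : ℝ × ℝ) : Prop :=
  p.1 ∈ Set.Icc (0:ℝ) 1 ∧ p.2 ∈ Set.Icc (0:ℝ) 1 ∧
  (∀ a ∈ Set.Icc (0:ℝ) 1, U1 a p.2 ≤ U1 p.1 p.2) ∧
  (∀ b ∈ Set.Icc (0:ℝ) 1, U2 p.1 b ≤ U2 p.1 p.2)

lemma sqrt_add_le_aux (b ε : ℝ) (hb : 0 ≤ b) (hε : 0 ≤ ε) :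
    Real.sqrt (b + ε) ≤ Real.sqrt b + Real.sqrt ε := by
  rw [show Real.sqrt b + Real.sqrt ε = Real.sqrt ((Real.sqrt b + Real.sqrt ε)^2) by
      rw [Real.sqrt_sq (by positivity)]]
  apply Real.sqrt_le_sqrt
  nlinarith [Real.sq_sqrt hb, Real.sq_sqrt hε, Real.sqrt_nonneg b, Real.sqrt_nonneg ε]

lemma sqrt_add_lt_aux (b ε : ℝ) (hb : 0 < b) (hε : 0 < ε) :
    Real.sqrt (b + ε) < Real.sqrt b + Real.sqrt ε := by
  rw [show Real.sqrt b + Real.sqrt ε = Real.sqrt ((Real.sqrt b + Real.sqrt ε)^2) by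
      rw [Real.sqrt_sq (by positivity)]]
  apply Real.sqrt_lt_sqrt (by positivity)
  nlinarith [Real.sq_sqrt hb.le, Real.sq_sqrt hε.le, Real.sqrt_pos.mpr hb,
    Real.sqrt_pos.mpr hε]

theorem stmt_19 (ε : ℝ) (hε : ε ∈ Set.Ioo (0:ℝ) 1) :
    IsPNE2 (fun e1 e2 => e1 * Real.sqrt (e2 + ε))
        (fun e1 e2 => e1 * Real.sqrt (e2 + ε) - Real.sqrt e2) (1, 0) ∧
    (∀ p : ℝ × ℝ,
      IsPNE2 (fun e1 e2 => e1 * Real.sqrt (e2 + ε))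
        (fun e1 e2 => e1 * Real.sqrt (e2 + ε) - Real.sqrt e2) p → p = (1, 0)) ∧
    IsPNE2 (fun e1 e2 => e1 * Real.sqrt e2)
        (fun e1 e2 => (e1 - 1) * Real.sqrt e2) (1, 1) ∧
    Real.sqrt 1 / Real.sqrt ε = 1 / Real.sqrt ε := by
  obtain ⟨hε0, hε1⟩ := hε
  have hsε : 0 < Real.sqrt ε := Real.sqrt_pos.mpr hε0
  refine ⟨⟨⟨zero_le_one, le_refl 1⟩, ⟨le_refl 0, zero_le_one⟩, ?_, ?_⟩, ?_, ?_, ?_⟩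
  · intro a ⟨ha0, ha1⟩
    simp only
    have : (0:ℝ) ≤ Real.sqrt (0 + ε) := Real.sqrt_nonneg _
    nlinarith
  · intro b ⟨hb0, hb1⟩
    simp only [Real.sqrt_zero, one_mul, sub_zero, zero_add]
    have := sqrt_add_le_aux b ε hb0 hε0.le
    linarith
  · rintro ⟨e1, e2⟩ ⟨⟨h10, h11⟩, ⟨h20, h21⟩, h1, h2⟩
    simp only at *
    have hsp : 0 < Real.sqrt (e2 + ε) := Real.sqrt_pos.mpr (by linarith)
    have he1 : e1 = 1 := by
      have := h1 1 ⟨zero_le_one, le_refl 1⟩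
      simp only [one_mul] at this
      nlinarith
    have he2 : e2 = 0 := by
      by_contra h
      have he2p : 0 < e2 := lt_of_le_of_ne h20 (Ne.symm h)
      have := h2 0 ⟨le_refl 0, zero_le_one⟩
      simp only [Real.sqrt_zero, sub_zero, he1, one_mul, zero_add] at this
      have hlt := sqrt_add_lt_aux e2 ε he2p hε0
      linarith
    simp [he1, he2]
  · refine ⟨⟨zero_le_one, le_refl 1⟩, ⟨zero_le_one, le_refl 1⟩, ?_, ?_⟩
    · intro a ⟨ha0, ha1⟩
      simp only
      nlinarith [Real.sqrt_nonneg (1:ℝ)]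
    · intro b ⟨hb0, hb1⟩
      simp only [sub_self, zero_mul]
      exact le_of_eq (by ring)
  · rw [Real.sqrt_one]
end
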